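/- If A is an SL_n-connection such that the associated GL_n-connection is gauge equivalent (by some g ∈ GL_n(K)) to a first-kind connection X(z) dlog z with X(z) ∈ gl_n(k[[z]]), then after pulling back along z ↦ z^n, A becomes SL_n(K)-gauge equivalent to a first-kind connection: explicitly, with f an n-th root of det(g^{-1})(z^n) in k((z)), h = f·i_n(g) lies in SL_n(K) and h[i_n(A)] = (nX(z^n) + z∂_z(f)f^{-1}·1) dlog z, where z∂_z(f)f^{-1} ∈ k[[z]]. -/

import Mathlib

open HahnSeries Matrix

variable {k : Type*} [Field k]

/-- The derivation `z * d/dz` on formal Laurent series. -/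
noncomputable def zD (f : LaurentSeries k) : LaurentSeries k where
  coeff i := (i : k) * f.coeff i
  isPWO_support' := f.isPWO_support'.mono (by
    intro i hi
    simp only [Function.mem_support, ne_eq] at hi ⊢
    exact fun h => hi (by rw [h, mul_zero]))

/-- `z∂_z` applied entrywise to a matrix of Laurent series. -/
noncomputable def zDM {n : ℕ} (g : Matrix (Fin n) (Fin n) (LaurentSeries k)) :
    Matrix (Fin n) (Fin n) (LaurentSeries k) :=
  Matrix.of fun a b => zD (g a b)

/-- A constant matrix, viewed as a matrix of Laurent series. -/
noncomputable def constM {n : ℕ} (X : Matrix (Fin n) (Fin n) k) :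
    Matrix (Fin n) (Fin n) (LaurentSeries k) :=
  X.map (HahnSeries.C : k →+* LaurentSeries k)

/-- The `i`-th coefficient matrix of a matrix of Laurent series. -/
def coeffM {n : ℕ} (g : Matrix (Fin n) (Fin n) (LaurentSeries k)) (i : ℤ) :
    Matrix (Fin n) (Fin n) k :=
  Matrix.of fun a b => (g a b).coeff i

/-- Substitution `z ↦ z^m` on Laurent series, as a ring homomorphism. -/
noncomputable def substL (m : ℕ+) : LaurentSeries k →+* LaurentSeries k :=
  embDomainRingHom
    { toFun := fun i => (m : ℤ) * i
      map_zero' := by simp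
      map_add' := by intro a b; ring }
    (fun a b h => by
      have : (m : ℤ) ≠ 0 := by positivity
      exact mul_left_cancel₀ this h)
    (fun a b => by
      constructor
      · intro h
        exact le_of_mul_le_mul_left h (by positivity)
      · intro h
        exact mul_le_mul_of_nonneg_left h (by positivity))

/-- Pull-back of the connection `A dlog z` along `z ↦ z^m`: `m · A(z^m) dlog z`. -/
noncomputable def pullbackConn {n : ℕ} (m : ℕ+) (A : Matrix (Fin n) (Fin n) (LaurentSeries k)) :
    Matrix (Fin n) (Fin n) (LaurentSeries k) :=
  ((m : ℕ) : k) • A.map (substL m)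

/-- `B` is of the first kind: no negative powers of `z`. -/
def FirstKind {n : ℕ} (B : Matrix (Fin n) (Fin n) (LaurentSeries k)) : Prop :=
  ∀ a b, ∀ l : ℤ, l < 0 → (B a b).coeff l = 0

/-!
Pull-back along `z ↦ z^n` commutes with the gauge action, because
`z∂_z (x(z^n)) = n (z∂_z x)(z^n)`; so `i_n(g)` carries `i_n(A)` to `i_n(X)`. Rescaling a gauge
transformation by a scalar `f` adds the logarithmic derivative `z∂_z(f) f⁻¹` to the target, and
this is a power series because `z∂_z(f) - (ord f) f` vanishes to order greater than `ord f`.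
Finally `fⁿ = det(i_n(g))⁻¹` is exactly what makes `det (f · i_n(g)) = 1`.
-/

section zD

lemma coeff_zD (f : LaurentSeries k) (i : ℤ) : (zD f).coeff i = (i : k) * f.coeff i := rfl

lemma support_zD_subset (f : LaurentSeries k) : (zD f).support ⊆ f.support :=
  fun i hi hf => hi (by rw [coeff_zD, hf, mul_zero])

lemma zD_mul (a b : LaurentSeries k) : zD (a * b) = zD a * b + a * zD b := by
  ext i
  rw [coeff_add, coeff_zD, coeff_mul,
    coeff_mul_left' a.isPWO_support (support_zD_subset a),
    coeff_mul_right' b.isPWO_support (support_zD_subset b),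
    ← Finset.sum_add_distrib, Finset.mul_sum]
  refine Finset.sum_congr rfl fun ⟨p, q⟩ hpq => ?_
  obtain rfl : p + q = i := (Finset.mem_antidiagonal.mp hpq).2.2
  simp only [coeff_zD]
  push_cast
  ring

lemma coeff_substL_mul (m : ℕ+) (x : LaurentSeries k) (i : ℤ) :
    (substL m x).coeff ((m : ℤ) * i) = x.coeff i :=
  embDomain_coeff

lemma coeff_substL_of_not_dvd (m : ℕ+) (x : LaurentSeries k) {j : ℤ} (h : ¬ (m : ℤ) ∣ j) :
    (substL m x).coeff j = 0 :=
  embDomain_notin_image_support fun ⟨i, _, hi⟩ => h ⟨i, hi.symm⟩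

lemma zD_substL (m : ℕ+) (x : LaurentSeries k) :
    zD (substL m x) = (m : ℕ) • substL m (zD x) := by
  ext j
  rw [coeff_zD, coeff_smul, nsmul_eq_mul]
  by_cases h : (m : ℤ) ∣ j
  · obtain ⟨i, rfl⟩ := h
    rw [coeff_substL_mul, coeff_substL_mul, coeff_zD]
    push_cast
    ring
  · rw [coeff_substL_of_not_dvd _ _ h, coeff_substL_of_not_dvd _ _ h, mul_zero, mul_zero]

lemma coe_order_add_one_le_orderTop_zD_sub (f : LaurentSeries k) :
    ((f.order + 1 : ℤ) : WithTop ℤ) ≤ (zD f - (f.order : k) • f).orderTop := by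
  refine le_orderTop_iff_forall.mpr fun j hj => ?_
  have hle : j ≤ f.order := Int.lt_add_one_iff.mp (WithTop.coe_lt_coe.mp hj)
  rw [coeff_sub, coeff_smul, coeff_zD, smul_eq_mul, ← sub_mul]
  rcases hle.lt_or_eq with hlt | rfl
  · rw [coeff_eq_zero_of_lt_order hlt, mul_zero]
  · rw [sub_self, zero_mul]

lemma orderTop_inv {f : LaurentSeries k} (hf : f ≠ 0) :
    f⁻¹.orderTop = ((-f.order : ℤ) : WithTop ℤ) := by
  have h := order_mul hf (inv_ne_zero hf)
  rw [mul_inv_cancel₀ hf, order_one] at h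
  rw [← order_eq_orderTop_of_ne_zero (inv_ne_zero hf)]
  exact congrArg _ (by omega)

lemma coeff_zD_mul_inv_of_neg (f : LaurentSeries k) {l : ℤ} (hl : l < 0) :
    (zD f * f⁻¹).coeff l = 0 := by
  rcases eq_or_ne f 0 with rfl | hf
  · rw [_root_.inv_zero, mul_zero, coeff_zero]
  have hsplit : zD f * f⁻¹ = C (f.order : k) + (zD f - (f.order : k) • f) * f⁻¹ := by
    rw [← C_mul_eq_smul, sub_mul, mul_assoc, mul_inv_cancel₀ hf, mul_one]
    ring
  have hrest : ((1 : ℤ) : WithTop ℤ) ≤ ((zD f - (f.order : k) • f) * f⁻¹).orderTop := by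
    rw [orderTop_mul, orderTop_inv hf]
    calc ((1 : ℤ) : WithTop ℤ)
        = ((f.order + 1 : ℤ) : WithTop ℤ) + ((-f.order : ℤ) : WithTop ℤ) := by
          norm_cast; ring
      _ ≤ _ := by gcongr; exact coe_order_add_one_le_orderTop_zD_sub f
  rw [hsplit, coeff_add, C_apply, coeff_single_of_ne hl.ne, zero_add]
  exact coeff_eq_zero_of_lt_orderTop (lt_of_lt_of_le (by exact_mod_cast hl.trans one_pos) hrest)

end zD

section Gauge

variable {n : ℕ}

/-- `g[A dlog z] = X dlog z`, multiplied on the right by `g` so that no inverse appears. -/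
def GaugeTransforms (g A X : Matrix (Fin n) (Fin n) (LaurentSeries k)) : Prop :=
  g * A + zDM g = X * g

lemma zDM_smul (f : LaurentSeries k) (G : Matrix (Fin n) (Fin n) (LaurentSeries k)) :
    zDM (f • G) = zD f • G + f • zDM G :=
  Matrix.ext fun _ _ => zD_mul _ _

lemma zDM_map_substL (m : ℕ+) (g : Matrix (Fin n) (Fin n) (LaurentSeries k)) :
    zDM (g.map (substL m)) = (m : ℕ) • (zDM g).map (substL m) :=
  Matrix.ext fun a b => zD_substL m (g a b)

lemma pullbackConn_eq_nsmul (m : ℕ+) (A : Matrix (Fin n) (Fin n) (LaurentSeries k)) :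
    pullbackConn m A = (m : ℕ) • A.map (substL m) :=
  Nat.cast_smul_eq_nsmul k _ _

lemma GaugeTransforms.map_substL (m : ℕ+) {g A X : Matrix (Fin n) (Fin n) (LaurentSeries k)}
    (h : GaugeTransforms g A X) :
    GaugeTransforms (g.map (substL m)) (pullbackConn m A) (pullbackConn m X) := by
  rw [GaugeTransforms, pullbackConn_eq_nsmul, pullbackConn_eq_nsmul, zDM_map_substL,
    Matrix.mul_smul, Matrix.smul_mul, ← smul_add, ← Matrix.map_mul, ← Matrix.map_mul,
    ← Matrix.map_add _ (map_add _), h]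

lemma GaugeTransforms.smul {f : LaurentSeries k} (hf : f ≠ 0)
    {G B Y : Matrix (Fin n) (Fin n) (LaurentSeries k)} (h : GaugeTransforms G B Y) :
    GaugeTransforms (f • G) B (Y + (zD f * f⁻¹) • 1) := by
  rw [GaugeTransforms, zDM_smul, Matrix.add_mul, Matrix.smul_mul _ 1, Matrix.one_mul, smul_smul,
    mul_assoc, inv_mul_cancel₀ hf, mul_one, Matrix.mul_smul, Matrix.smul_mul, ← h, smul_add]
  abel

end Gauge

lemma det_smul_map_eq_one {ι K L : Type*} [Fintype ι] [DecidableEq ι] [Field K] [CommRing L]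
    (σ : K →+* L) {g : Matrix ι ι K} (hg : g.det ≠ 0) {f : L}
    (hf : f ^ Fintype.card ι = σ g.det⁻¹) : (f • g.map σ).det = 1 := by
  rw [det_smul, hf, ← σ.mapMatrix_apply, ← σ.map_det, ← map_mul, inv_mul_cancel₀ hg,
    map_one]

theorem stmt17_general {n : ℕ} (hn : 0 < n)
    (A g X : Matrix (Fin n) (Fin n) (LaurentSeries k))
    (hgu : IsUnit g.det)
    (hgauge : g * A + zDM g = X * g)
    (f : LaurentSeries k)
    (hf : f ^ n = substL ⟨n, hn⟩ (g.det)⁻¹) :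
    letI h : Matrix (Fin n) (Fin n) (LaurentSeries k) := f • g.map (substL ⟨n, hn⟩)
    Matrix.det h = 1 ∧
    h * pullbackConn ⟨n, hn⟩ A + zDM h
      = (pullbackConn ⟨n, hn⟩ X + (zD f * f⁻¹) • (1 : Matrix (Fin n) (Fin n) (LaurentSeries k))) * h ∧
    (∀ l : ℤ, l < 0 → (zD f * f⁻¹).coeff l = 0) := by
  have hdet : g.det ≠ 0 := hgu.ne_zero
  have hf0 : f ≠ 0 := by
    rintro rfl
    exact inv_ne_zero hdet <| (map_eq_zero_iff _ (substL _).injective).mp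
      ((zero_pow hn.ne').symm.trans hf).symm
  refine ⟨det_smul_map_eq_one _ hdet (by rwa [Fintype.card_fin]),
    GaugeTransforms.smul hf0 (GaugeTransforms.map_substL _ hgauge),
    fun l hl => coeff_zD_mul_inv_of_neg f hl⟩

/-- If the `GL_n`-connection associated to a traceless `A` is gauge equivalent via
`g ∈ GL_n(K)` to a first-kind connection `X dlog z`, then with `f` an `n`-th root
of `det(g⁻¹)(z^n)`, the matrix `h = f · i_n(g)` lies in `SL_n(K)` and
`h[i_n(A)] = (n X(z^n) + z∂_z(f) f⁻¹ · 1) dlog z`, where `z∂_z(f) f⁻¹` is a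
formal power series; so `i_n(A)` is `SL_n(K)`-gauge equivalent to a first-kind
connection. -/
theorem stmt17 {n : ℕ} (hn : 0 < n)
    (A g X : Matrix (Fin n) (Fin n) (LaurentSeries k))
    (htrA : Matrix.trace A = 0)
    (hgu : IsUnit g.det) (hXfk : FirstKind X)
    (hgauge : g * A + zDM g = X * g)
    (f : LaurentSeries k)
    (hf : f ^ n = substL ⟨n, hn⟩ (g.det)⁻¹) :
    letI h : Matrix (Fin n) (Fin n) (LaurentSeries k) := f • g.map (substL ⟨n, hn⟩)
    Matrix.det h = 1 ∧
    h * pullbackConn ⟨n, hn⟩ A + zDM h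
      = (pullbackConn ⟨n, hn⟩ X + (zD f * f⁻¹) • (1 : Matrix (Fin n) (Fin n) (LaurentSeries k))) * h ∧
    (∀ l : ℤ, l < 0 → (zD f * f⁻¹).coeff l = 0) :=
  stmt17_general hn A g X hgu hgauge f hf
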